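/- arXiv:1907.07834 — 2 statements merged into one kernel-verified Lean document; each statement's English description precedes it below -/
import Mathlib

section
/- Fix λ > 0, d ≥ 2, and ρ̄ ∈ (0,1) with 1-ρ̄ = exp(-(λ/(d-1))(1-(1-ρ̄)^{d-1})). Let λ* = λ(1-ρ̄)^{d-1} and define h(y) = exp(-(λ/(d-1))·(1-(1-y N^{α-1}-ρ̄)^{d-1})) for a real parameter N > 0 and α ∈ (1/2,1). Then, as N → ∞, N·g_{d,λ}(yN^{α-1}+ρ̄) = -y(1-λ*)N^α + O(N^{2α-1}), where g_{d,λ}(x) = 1 - x - exp(-(λ/(d-1))(1-(1-x)^{d-1})). -/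
theorem drift_taylor_expansion (lam : ℝ) (hlam : 0 < lam) (d : ℕ) (hd : 2 ≤ d)
    (ρ : ℝ) (hρ : ρ ∈ Set.Ioo (0:ℝ) 1)
    (hρeq : 1 - ρ = Real.exp (-(lam / ((d:ℝ) - 1)) * (1 - (1 - ρ) ^ (d - 1))))
    (lamStar : ℝ) (hlamStar : lamStar = lam * (1 - ρ) ^ (d - 1))
    (α : ℝ) (hα : α ∈ Set.Ioo (1/2 : ℝ) 1) (y : ℝ) :
    ∃ C > (0:ℝ), ∃ N₀ : ℝ, ∀ N : ℝ, N₀ ≤ N →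
      |N * (1 - (y * N ^ (α - 1) + ρ)
            - Real.exp (-(lam / ((d:ℝ) - 1))
                * (1 - (1 - (y * N ^ (α - 1) + ρ)) ^ (d - 1))))
          + y * (1 - lamStar) * N ^ α|
        ≤ C * N ^ (2 * α - 1) := by
  obtain ⟨hα1, hα2⟩ := hα
  set m : ℕ := d - 1 with hm
  have hmd : m + 1 = d := by omega
  have hd2 : (2:ℝ) ≤ (d:ℝ) := by exact_mod_cast hd
  have hdm : (m:ℝ) = (d:ℝ) - 1 := by
    have : ((m:ℝ) + 1) = (d:ℝ) := by exact_mod_cast congrArg (Nat.cast : ℕ → ℝ) hmd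
    linarith
  have hd1 : (0:ℝ) < (d:ℝ) - 1 := by linarith
  set c : ℝ := -(lam / ((d:ℝ) - 1)) with hc
  set f : ℝ → ℝ := fun x => 1 - x - Real.exp (c * (1 - (1 - x) ^ m)) with hf
  set f' : ℝ → ℝ := fun x =>
    -1 - Real.exp (c * (1 - (1 - x) ^ m)) * (c * ((m : ℝ) * (1 - x) ^ (m - 1))) with hf'
  have hderiv : ∀ x : ℝ, HasDerivAt f (f' x) x := by
    intro x
    have h1 : HasDerivAt (fun x : ℝ => 1 - x) (-1) x := by
      simpa using (hasDerivAt_id x).const_sub 1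
    have h2 : HasDerivAt (fun x : ℝ => (1 - x) ^ m) ((m : ℝ) * (1 - x) ^ (m - 1) * (-1)) x :=
      (hasDerivAt_pow m (1 - x)).comp x h1
    have h3 : HasDerivAt (fun x : ℝ => c * (1 - (1 - x) ^ m))
        (c * (-((m : ℝ) * (1 - x) ^ (m - 1) * (-1)))) x := (h2.const_sub 1).const_mul c
    have h4 := (Real.hasDerivAt_exp (c * (1 - (1 - x) ^ m))).comp x h3
    have h5 : HasDerivAt (fun x => (1 - x) - Real.exp (c * (1 - (1 - x) ^ m))) _ x := h1.sub h4
    convert h5 using 1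
    simp [hf']
  have hfρ : f ρ = 0 := by
    simp only [hf]
    rw [← hρeq]
    ring
  have hf'ρ : f' ρ = lamStar - 1 := by
    have hexp : Real.exp (c * (1 - (1 - ρ) ^ m)) = 1 - ρ := by rw [← hρeq]
    have hpow : (1 - ρ) * (1 - ρ) ^ (m - 1) = (1 - ρ) ^ m := by
      have h1m : m - 1 + 1 = m := by omega
      rw [← pow_succ', h1m]
    have hcm : c * (m : ℝ) = -lam := by
      rw [hc, hdm]
      field_simp
    simp only [hf', hexp, hlamStar]
    have : (1 - ρ) * (c * ((m:ℝ) * (1 - ρ) ^ (m - 1))) = c * (m:ℝ) * ((1-ρ) * (1-ρ)^(m-1)) := by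
      ring
    rw [this, hpow, hcm]
    ring
  -- smoothness of f'
  have hsmooth : ContDiff ℝ ((⊤:ℕ∞):WithTop ℕ∞) f' := by
    apply ContDiff.sub contDiff_const
    apply ContDiff.mul
    · exact Real.contDiff_exp.comp (contDiff_const.mul (contDiff_const.sub
        ((contDiff_const.sub contDiff_id).pow m)))
    · exact contDiff_const.mul (contDiff_const.mul ((contDiff_const.sub contDiff_id).pow (m-1)))
  have hdiff : Differentiable ℝ f' := (contDiff_infty_iff_deriv.mp hsmooth).1
  have hcont : Continuous (deriv f') :=
    ((contDiff_infty_iff_deriv.mp hsmooth).2).continuous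
  obtain ⟨K, hK⟩ := (isCompact_Icc : IsCompact (Set.Icc (ρ - 1) (ρ + 1))).exists_bound_of_continuousOn
    hcont.continuousOn
  have hK0 : 0 ≤ K := le_trans (norm_nonneg _) (hK ρ ⟨by linarith, by linarith⟩)
  have hLip : ∀ s ∈ Set.Icc (ρ - 1) (ρ + 1), |f' s - f' ρ| ≤ K * |s - ρ| := by
    intro s hs
    have := (convex_Icc (ρ-1) (ρ+1)).norm_image_sub_le_of_norm_hasDerivWithin_le
      (fun x hx => ((hdiff x).hasDerivAt).hasDerivWithinAt) hK
      (⟨by linarith, by linarith⟩ : ρ ∈ Set.Icc (ρ-1) (ρ+1)) hs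
    simpa [Real.norm_eq_abs] using this
  have key : ∀ t : ℝ, |t| ≤ 1 → |f (ρ + t) - f ρ - f' ρ * t| ≤ K * t ^ 2 := by
    intro t ht
    have habs := abs_nonneg t
    set s : Set ℝ := Set.Icc (ρ - |t|) (ρ + |t|) with hsdef
    have hsub : s ⊆ Set.Icc (ρ - 1) (ρ + 1) :=
      Set.Icc_subset_Icc (by linarith) (by linarith)
    have hφ : ∀ x ∈ s, HasDerivWithinAt (fun x => f x - f' ρ * x) (f' x - f' ρ) s x := by
      intro x hx
      have h : HasDerivWithinAt (fun x => f x - f' ρ * x) (f' x - f' ρ * 1) s x :=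
        ((hderiv x).sub ((hasDerivAt_id x).const_mul (f' ρ))).hasDerivWithinAt
      simpa using h
    have bound : ∀ x ∈ s, ‖f' x - f' ρ‖ ≤ K * |t| := by
      intro x hx
      refine le_trans (by simpa [Real.norm_eq_abs] using hLip x (hsub hx)) ?_
      have hx1 := hx.1
      have hx2 := hx.2
      have : |x - ρ| ≤ |t| := abs_sub_le_iff.mpr ⟨by linarith [hx.2], by linarith [hx.1]⟩
      nlinarith
    have hmem1 : ρ ∈ s := ⟨by linarith, by linarith⟩
    have hmem2 : ρ + t ∈ s := ⟨by linarith [neg_abs_le t], by linarith [le_abs_self t]⟩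
    have := (convex_Icc _ _).norm_image_sub_le_of_norm_hasDerivWithin_le hφ bound hmem1 hmem2
    have h2 : ‖(f (ρ + t) - f' ρ * (ρ + t)) - (f ρ - f' ρ * ρ)‖
        = |f (ρ + t) - f ρ - f' ρ * t| := by
      rw [Real.norm_eq_abs]; congr 1; ring
    rw [h2] at this
    calc |f (ρ + t) - f ρ - f' ρ * t| ≤ K * |t| * ‖ρ + t - ρ‖ := this
      _ = K * t ^ 2 := by
          rw [Real.norm_eq_abs, add_sub_cancel_left, mul_assoc, abs_mul_abs_self, sq]
  -- choose constants
  have h1α : 0 < 1 - α := by linarith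
  refine ⟨K * y ^ 2 + 1, by positivity, max 1 ((|y| + 1) ^ (1 / (1 - α))), ?_⟩
  intro N hN
  have hN1 : (1:ℝ) ≤ N := le_trans (le_max_left _ _) hN
  have hNpos : (0:ℝ) < N := by linarith
  set t : ℝ := y * N ^ (α - 1) with htdef
  -- |t| ≤ 1
  have hNpow : |y| + 1 ≤ N ^ (1 - α) := by
    have h0 : (0:ℝ) ≤ |y| + 1 := by positivity
    have hbase : (|y| + 1) ^ (1 / (1 - α)) ≤ N := le_trans (le_max_right _ _) hN
    have := Real.rpow_le_rpow (by positivity) hbase (le_of_lt h1α)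
    rwa [← Real.rpow_mul h0, one_div, inv_mul_cancel₀ (ne_of_gt h1α), Real.rpow_one] at this
  have hNα : (0:ℝ) < N ^ (1 - α) := Real.rpow_pos_of_pos hNpos _
  have ht1 : |t| ≤ 1 := by
    have hrw : N ^ (α - 1) = (N ^ (1 - α))⁻¹ := by
      rw [← Real.rpow_neg (le_of_lt hNpos)]
      norm_num
    have : |t| = |y| * (N ^ (1 - α))⁻¹ := by
      rw [htdef, abs_mul, hrw, abs_inv, abs_of_pos hNα]
    rw [this]
    rw [mul_inv_le_iff₀ hNα, one_mul]
    linarith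
  -- rewrite the goal
  have hkey := key t ht1
  have hNe1 : N ^ (α - 1) * N = N ^ α := by
    have := Real.rpow_add_one (ne_of_gt hNpos) (α - 1)
    rw [sub_add_cancel] at this
    exact this.symm
  have hNe2 : N ^ (α - 1) * N ^ (α - 1) * N = N ^ (2 * α - 1) := by
    rw [← Real.rpow_add hNpos,
      show 2 * α - 1 = α - 1 + (α - 1) + 1 by ring,
      Real.rpow_add_one (ne_of_gt hNpos)]
  have hgoal_eq : N * (1 - (y * N ^ (α - 1) + ρ)
            - Real.exp (-(lam / ((d:ℝ) - 1))
                * (1 - (1 - (y * N ^ (α - 1) + ρ)) ^ (d - 1))))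
          + y * (1 - lamStar) * N ^ α
      = N * (f (ρ + t) - f ρ - f' ρ * t) := by
    have harg : f (ρ + t) = 1 - (y * N ^ (α - 1) + ρ)
            - Real.exp (-(lam / ((d:ℝ) - 1))
                * (1 - (1 - (y * N ^ (α - 1) + ρ)) ^ (d - 1))) := by
      simp only [hf, hc, ← hm, htdef]
      ring_nf
    rw [harg, hfρ, hf'ρ, htdef]
    have : y * (1 - lamStar) * N ^ α = -((lamStar - 1) * (y * N ^ (α-1)) * N) := by
      rw [← hNe1]; ring
    rw [this]; ring
  rw [hgoal_eq, abs_mul, abs_of_pos hNpos]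
  calc N * |f (ρ + t) - f ρ - f' ρ * t| ≤ N * (K * t ^ 2) := by
        exact mul_le_mul_of_nonneg_left hkey (le_of_lt hNpos)
    _ = K * y ^ 2 * N ^ (2 * α - 1) := by
        rw [htdef, mul_pow, ← hNe2]; ring
    _ ≤ (K * y ^ 2 + 1) * N ^ (2 * α - 1) := by
        have : (0:ℝ) < N ^ (2 * α - 1) := Real.rpow_pos_of_pos hNpos _
        nlinarith
end

section
/- With the notation of the linear recursion A_{t+1} - x_{t+1} = (1-α_{t+1})(A_t - x_t) + Δ_{t+1} + ε_{t+1} with A_0 = x_0, if |ε_i| ≤ C/N for all i and β_t/β_i ∈ [0,1] for i ≤ t, then |A_t - x_t - β_t S_t| ≤ Ct/N for all 1 ≤ t ≤ N, where S_t = Σ_{i=1}^t Δ_i/β_i. -/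
open Finset

/-- Discrete variation of constants, with `β` a fundamental solution of the homogeneous
recursion: the forcing `ε` left out of the approximation is propagated by the factors `β t / β i`. -/
theorem sub_mul_sum_div_eq_sum_div_mul {K : Type*} [Field K] (a β Δ ε e : ℕ → K)
    (hβ₀ : ∀ t, β t ≠ 0) (hβ : ∀ t, β (t + 1) = a (t + 1) * β t) (h0 : e 0 = 0)
    (hrec : ∀ t, e (t + 1) = a (t + 1) * e t + Δ (t + 1) + ε (t + 1)) (t : ℕ) :
    e t - β t * ∑ i ∈ Icc 1 t, Δ i / β i = ∑ i ∈ Icc 1 t, β t / β i * ε i := by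
  induction t with
  | zero => simp [h0]
  | succ t ih =>
    have ha : a (t + 1) = β (t + 1) / β t := by rw [hβ, mul_div_cancel_right₀ _ (hβ₀ t)]
    have hpropagate : ∑ i ∈ Icc 1 t, β (t + 1) / β i * ε i
        = a (t + 1) * ∑ i ∈ Icc 1 t, β t / β i * ε i := by
      rw [mul_sum]
      refine sum_congr rfl fun i _ => ?_
      rw [ha]
      field_simp [hβ₀ t, hβ₀ i]
    rw [sum_Icc_succ_top (by omega), sum_Icc_succ_top (by omega), hpropagate, ← ih, hrec,
      div_self (hβ₀ (t + 1))]
    field_simp [hβ₀ (t + 1)]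
    rw [hβ]
    ring

theorem abs_sum_mul_le_card_mul {ι : Type*} (s : Finset ι) (w ε : ι → ℝ) (B : ℝ)
    (hw : ∀ i ∈ s, w i ∈ Set.Icc (0 : ℝ) 1) (hε : ∀ i ∈ s, |ε i| ≤ B) :
    |∑ i ∈ s, w i * ε i| ≤ #s * B := by
  calc |∑ i ∈ s, w i * ε i|
      ≤ ∑ i ∈ s, |w i * ε i| := abs_sum_le_sum_abs _ _
    _ ≤ ∑ _i ∈ s, B := sum_le_sum fun i hi => by
        rw [abs_mul, abs_of_nonneg (hw i hi).1]
        exact (mul_le_of_le_one_left (abs_nonneg _) (hw i hi).2).trans (hε i hi)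
    _ = #s * B := by rw [sum_const, nsmul_eq_mul]

theorem exploration_approximation_error_general
    (N : ℕ) (C : ℝ)
    (α Δ ε A x : ℕ → ℝ)
    (hα : ∀ i, α i ∈ Set.Ico (0:ℝ) 1)
    (β : ℕ → ℝ) (hβ : ∀ t, β t = ∏ i ∈ Finset.Icc 1 t, (1 - α i))
    (h0 : A 0 = x 0)
    (hrec : ∀ t, A (t + 1) - x (t + 1)
      = (1 - α (t + 1)) * (A t - x t) + Δ (t + 1) + ε (t + 1))
    (hε : ∀ i, |ε i| ≤ C / (N:ℝ))
    (hratio : ∀ i t : ℕ, i ≤ t → β t / β i ∈ Set.Icc (0:ℝ) 1)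
    (S : ℕ → ℝ) (hS : ∀ t, S t = ∑ i ∈ Finset.Icc 1 t, Δ i / β i) :
    ∀ t : ℕ, 1 ≤ t → t ≤ N →
      |A t - x t - β t * S t| ≤ C * (t:ℝ) / (N:ℝ) := by
  intro t _ _
  have hβ₀ : ∀ t, β t ≠ 0 := fun t => by
    rw [hβ]
    exact (prod_pos fun i _ => sub_pos.mpr (hα i).2).ne'
  have hβsucc : ∀ t, β (t + 1) = (1 - α (t + 1)) * β t := fun t => by
    rw [hβ, hβ, prod_Icc_succ_top (by omega), mul_comm]
  rw [hS, sub_mul_sum_div_eq_sum_div_mul (fun t => 1 - α t) β Δ ε (fun t => A t - x t)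
    hβ₀ hβsucc (sub_eq_zero.mpr h0) hrec t]
  calc |∑ i ∈ Icc 1 t, β t / β i * ε i|
      ≤ #(Icc 1 t) * (C / N) := abs_sum_mul_le_card_mul _ _ _ _
        (fun i hi => hratio i t (mem_Icc.mp hi).2) (fun i _ => hε i)
    _ = C * t / N := by rw [Nat.card_Icc, Nat.add_sub_cancel]; ring

theorem exploration_approximation_error
    (N : ℕ) (hN : 0 < N) (C : ℝ) (hC : 0 < C)
    (α Δ ε A x : ℕ → ℝ)
    (hα : ∀ i, α i ∈ Set.Ico (0:ℝ) 1)
    (β : ℕ → ℝ) (hβ : ∀ t, β t = ∏ i ∈ Finset.Icc 1 t, (1 - α i))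
    (h0 : A 0 = x 0)
    (hrec : ∀ t, A (t + 1) - x (t + 1)
      = (1 - α (t + 1)) * (A t - x t) + Δ (t + 1) + ε (t + 1))
    (hε : ∀ i, |ε i| ≤ C / (N:ℝ))
    (hratio : ∀ i t : ℕ, i ≤ t → β t / β i ∈ Set.Icc (0:ℝ) 1)
    (S : ℕ → ℝ) (hS : ∀ t, S t = ∑ i ∈ Finset.Icc 1 t, Δ i / β i) :
    ∀ t : ℕ, 1 ≤ t → t ≤ N →
      |A t - x t - β t * S t| ≤ C * (t:ℝ) / (N:ℝ) :=
  exploration_approximation_error_general N C α Δ ε A x hα β hβ h0 hrec hε hratio S hS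
end
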